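/- Let u* = √(π/2), σ ∈ (1/2,1), v ∈ (0, u*), and define r(v,σ) = v·Φ((u*−v)/σ) with Φ the standard Gaussian CDF, and let v*(σ) be the maximizer of r(·,σ). Then r(v*(σ),σ) − r(v,σ) ≥ (1/60)·(v*(σ) − v)². -/

import Mathlib

/-!
The maximiser `v*` of `r = r(·, σ)` is a critical point, and it lies in `(0, √(π/2))`: it beats
`r(√(π/2)) = √(π/2)/2 > 0`, while `r' < 0` on `[√(π/2), ∞)` by the Mills-ratio bound on the
Gaussian tail (far from the mean) and the bound `Φ(x) ≤ 1/2 + x φ(x)` (near it). On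
`[0, √(π/2)]` the standardised argument stays in `[0, 2√(π/2)]`, so `φ ≥ 1/60` there and
`r'' ≤ -2φ ≤ -1/30`; hence `-r - (x - v*)² / 60` is convex with a critical point at `v*`, which
is therefore its minimum.
-/

noncomputable def gaussPDF (ω : ℝ) : ℝ :=
  (Real.sqrt (2 * Real.pi))⁻¹ * Real.exp (-ω ^ 2 / 2)

noncomputable def gaussCDF (ω : ℝ) : ℝ := ∫ t in Set.Iic ω, gaussPDF t

open Real MeasureTheory Set Filter ProbabilityTheory

lemma sqrt_two_mul_pi : √(2 * π) = 2 * √(π / 2) := by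
  rw [show 2 * π = 2 ^ 2 * (π / 2) by ring, sqrt_mul (by norm_num), sqrt_sq (by norm_num)]

lemma sqrt_pi_div_two_gt : 1.25 < √(π / 2) :=
  lt_sqrt_of_sq_lt (by linarith [pi_gt_d2])

lemma sqrt_pi_div_two_lt : √(π / 2) < 1.255 :=
  (sqrt_lt' (by norm_num)).2 (by linarith [pi_lt_d2])

lemma exp_pi_lt : exp π < 23.7 := by
  have h₁ : exp π < exp 1 ^ 3 * exp 0.15 := by
    rw [← exp_nat_mul, ← exp_add]; exact exp_lt_exp.2 (by norm_num; linarith [pi_lt_d2])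
  have h₂ : exp 0.15 ≤ 1 / (1 - 0.15) :=
    exp_bound_div_one_sub_of_interval (by norm_num) (by norm_num)
  have h₃ : exp 1 ^ 3 < 2.7182818286 ^ 3 := by gcongr; exact exp_one_lt_d9
  calc exp π < exp 1 ^ 3 * exp 0.15 := h₁
    _ ≤ 2.7182818286 ^ 3 * (1 / (1 - 0.15)) := by gcongr
    _ < 23.7 := by norm_num

lemma gaussPDF_eq_gaussianPDFReal : gaussPDF = gaussianPDFReal 0 1 := by
  ext x; simp [gaussPDF, gaussianPDFReal]

lemma gaussPDF_pos (x : ℝ) : 0 < gaussPDF x := by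
  unfold gaussPDF; positivity

lemma gaussPDF_neg (x : ℝ) : gaussPDF (-x) = gaussPDF x := by
  simp [gaussPDF]

lemma integrable_gaussPDF : Integrable gaussPDF :=
  gaussPDF_eq_gaussianPDFReal ▸ integrable_gaussianPDFReal 0 1

lemma integral_gaussPDF : ∫ x, gaussPDF x = 1 :=
  gaussPDF_eq_gaussianPDFReal ▸ integral_gaussianPDFReal_eq_one 0 one_ne_zero

lemma hasDerivAt_gaussPDF (x : ℝ) : HasDerivAt gaussPDF (-x * gaussPDF x) x := by
  have h : HasDerivAt (fun t : ℝ ↦ -t ^ 2 / 2) (-x) x := by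
    simpa [neg_div] using (hasDerivAt_pow 2 x).neg.div_const 2
  exact (h.exp.const_mul (√(2 * π))⁻¹).congr_deriv (by simp only [gaussPDF]; ring)

lemma continuous_gaussPDF : Continuous gaussPDF :=
  continuous_iff_continuousAt.2 fun x ↦ (hasDerivAt_gaussPDF x).continuousAt

lemma gaussCDF_sub_gaussCDF (a b : ℝ) : gaussCDF b - gaussCDF a = ∫ t in a..b, gaussPDF t :=
  intervalIntegral.integral_Iic_sub_Iic integrable_gaussPDF.integrableOn
    integrable_gaussPDF.integrableOn

lemma hasDerivAt_gaussCDF (x : ℝ) : HasDerivAt gaussCDF (gaussPDF x) x := by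
  have h := intervalIntegral.integral_hasDerivAt_right (integrable_gaussPDF.intervalIntegrable)
    (continuous_gaussPDF.stronglyMeasurableAtFilter _ _) continuous_gaussPDF.continuousAt
    (a := 0) (b := x)
  have h_eq : gaussCDF = fun y ↦ gaussCDF 0 + ∫ t in 0..y, gaussPDF t := by
    ext y; rw [← gaussCDF_sub_gaussCDF]; ring
  exact h_eq ▸ h.const_add (gaussCDF 0)

lemma gaussCDF_pos (x : ℝ) : 0 < gaussCDF x := by
  rw [gaussCDF, setIntegral_pos_iff_support_of_nonneg_ae
    (Eventually.of_forall fun t ↦ (gaussPDF_pos t).le) integrable_gaussPDF.integrableOn,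
    Function.support_eq_univ fun t ↦ (gaussPDF_pos t).ne', univ_inter]
  simp

lemma gaussCDF_zero : gaussCDF 0 = 1 / 2 := by
  have h_symm : ∫ t in Ioi 0, gaussPDF t = gaussCDF 0 := by
    simpa [gaussPDF_neg, gaussCDF] using integral_comp_neg_Ioi 0 gaussPDF
  have h_split : gaussCDF 0 + ∫ t in Ioi 0, gaussPDF t = 1 := by
    rw [← integral_gaussPDF, gaussCDF, ← setIntegral_union (Iic_disjoint_Ioi le_rfl)
      measurableSet_Ioi integrable_gaussPDF.integrableOn integrable_gaussPDF.integrableOn,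
      Iic_union_Ioi, setIntegral_univ]
  linarith

lemma integrable_neg_mul_gaussPDF : Integrable fun t : ℝ ↦ -t * gaussPDF t := by
  refine ((integrable_mul_exp_neg_mul_sq (b := 1 / 2) (by norm_num)).const_mul
    (-(√(2 * π))⁻¹)).congr (Eventually.of_forall fun t ↦ ?_)
  simp only [gaussPDF]; ring_nf

lemma integral_Iic_neg_mul_gaussPDF (x : ℝ) : ∫ t in Iic x, -t * gaussPDF t = gaussPDF x := by
  have h_lim : Tendsto gaussPDF atBot (nhds 0) := by
    have h := ((tendsto_rpow_abs_mul_exp_neg_mul_sq_cocompact (a := 1 / 2) (by norm_num)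
      0).mono_left atBot_le_cocompact).const_mul (√(2 * π))⁻¹
    rw [mul_zero] at h
    refine h.congr fun t ↦ ?_
    simp only [gaussPDF, rpow_zero, one_mul]; ring_nf
  rw [integral_Iic_of_hasDerivAt_of_tendsto continuous_gaussPDF.continuousWithinAt
    (fun t _ ↦ hasDerivAt_gaussPDF t) integrable_neg_mul_gaussPDF.integrableOn h_lim, sub_zero]

lemma neg_mul_gaussCDF_le (x : ℝ) : -x * gaussCDF x ≤ gaussPDF x := by
  rw [← integral_Iic_neg_mul_gaussPDF, gaussCDF, ← integral_const_mul]
  exact setIntegral_mono_on (integrable_gaussPDF.integrableOn.const_mul _)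
    integrable_neg_mul_gaussPDF.integrableOn measurableSet_Iic fun t (ht : t ≤ x) ↦ by gcongr; exact (gaussPDF_pos t).le

lemma gaussPDF_le_gaussPDF {x y : ℝ} (hxy : x ≤ y) (hy : y ≤ 0) : gaussPDF x ≤ gaussPDF y := by
  unfold gaussPDF; gcongr _ * ?_; exact exp_le_exp.2 (by nlinarith)

lemma gaussCDF_le_half_add_mul {x : ℝ} (hx : x ≤ 0) : gaussCDF x ≤ 1 / 2 + x * gaussPDF x := by
  have h : ∫ _ in x..0, gaussPDF x ≤ ∫ t in x..0, gaussPDF t :=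
    intervalIntegral.integral_mono_on hx intervalIntegrable_const
      integrable_gaussPDF.intervalIntegrable fun t ht ↦ gaussPDF_le_gaussPDF ht.1 ht.2
  rw [← gaussCDF_sub_gaussCDF, gaussCDF_zero, intervalIntegral.integral_const, smul_eq_mul] at h
  linarith

lemma gaussPDF_eq_exp_div (x : ℝ) : gaussPDF x = exp (-x ^ 2 / 2) / (2 * √(π / 2)) := by
  rw [gaussPDF, sqrt_two_mul_pi, inv_mul_eq_div]

/-- At `x = 0` this is sharp: `Φ 0 = 1 / 2 = √(π/2) * φ 0`. -/
lemma gaussCDF_lt_sub_mul_gaussPDF {x c : ℝ} (hx : x ≤ 0) (hc : √(π / 2) < c) :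
    gaussCDF x < (c - x) * gaussPDF x := by
  have hu := sqrt_pi_div_two_gt
  have hu' := sqrt_pi_div_two_lt
  have hp := gaussPDF_pos x
  rcases le_or_gt x (-3 / 5) with hx' | hx'
  · -- Mills' ratio: `-x Φ(x) ≤ φ(x) < -x (c - x) φ(x)`
    have h_mills := neg_mul_gaussCDF_le x
    have h_one : 1 < -x * (c - x) := by nlinarith
    by_contra! h
    nlinarith [mul_le_mul_of_nonneg_left h (by linarith : 0 ≤ -x)]
  · have h := gaussCDF_le_half_add_mul hx
    have h_exp : 1 - x ^ 2 / 2 ≤ exp (-x ^ 2 / 2) := by linarith [add_one_le_exp (-x ^ 2 / 2)]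
    have h_half : 1 / 2 < (c - 2 * x) * gaussPDF x := by
      rw [gaussPDF_eq_exp_div, mul_div_assoc', lt_div_iff₀ (by positivity)]
      calc 1 / 2 * (2 * √(π / 2)) < (c - 2 * x) * (1 - x ^ 2 / 2) := by
            nlinarith [mul_pos (sub_pos.2 hc) (show 0 < 1 - x ^ 2 / 2 by nlinarith),
              mul_nonneg (neg_nonneg.2 hx) (show 0 ≤ 2 - x ^ 2 + √(π / 2) * x / 2 by nlinarith)]
        _ ≤ (c - 2 * x) * exp (-x ^ 2 / 2) := by gcongr; linarith
    linarith

lemma one_div_sixty_le_gaussPDF {x : ℝ} (hx : x ^ 2 ≤ 2 * π) : 1 / 60 ≤ gaussPDF x := by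
  have h_exp : exp (-π) ≤ exp (-x ^ 2 / 2) := exp_le_exp.2 (by linarith)
  have h_pi : exp π * exp (-π) = 1 := by rw [← exp_add, add_neg_cancel, exp_zero]
  rw [gaussPDF_eq_exp_div, le_div_iff₀ (by positivity)]
  nlinarith [exp_pi_lt, sqrt_pi_div_two_lt, exp_pos (-π)]

lemma half_mul_sq_le_sub_of_deriv2_le {f f' f'' : ℝ → ℝ} {a b k m v : ℝ}
    (hf : ∀ x ∈ Icc a b, HasDerivAt f (f' x) x) (hf' : ∀ x ∈ Ioo a b, HasDerivAt f' (f'' x) x)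
    (hf'' : ∀ x ∈ Ioo a b, f'' x ≤ -k) (hm : m ∈ Ioo a b) (hm' : f' m = 0) (hv : v ∈ Icc a b) :
    k / 2 * (v - m) ^ 2 ≤ f m - f v := by
  set g : ℝ → ℝ := fun x ↦ -f x - k / 2 * (x - m) ^ 2
  set g' : ℝ → ℝ := fun x ↦ -f' x - k * (x - m)
  have hg : ∀ x ∈ Icc a b, HasDerivAt g (g' x) x := fun x hx ↦
    ((hf x hx).neg.sub (((hasDerivAt_id x).sub_const m).pow 2 |>.const_mul (k / 2))).congr_deriv
      (by simp only [g', id]; ring)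
  have hg' : ∀ x ∈ Ioo a b, HasDerivAt g' (-f'' x - k) x := fun x hx ↦
    ((hf' x hx).neg.sub (((hasDerivAt_id x).sub_const m).const_mul k)).congr_deriv (by simp)
  have h_convex : ConvexOn ℝ (Icc a b) g := by
    refine convexOn_of_hasDerivWithinAt2_nonneg (f' := g') (f'' := fun x ↦ -f'' x - k)
      (convex_Icc a b) (fun x hx ↦ (hg x hx).continuousAt.continuousWithinAt)
      (fun x hx ↦ ?_) (fun x hx ↦ ?_) fun x hx ↦ ?_ <;> rw [interior_Icc] at hx
    · exact (hg x (Ioo_subset_Icc_self hx)).hasDerivWithinAt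
    · exact (hg' x hx).hasDerivWithinAt
    · linarith [hf'' x hx]
  have h_min : IsMinOn g (Icc a b) m := by
    refine h_convex.isMinOn_of_rightDeriv_eq_zero (by rwa [interior_Icc]) ?_
    simpa [g', hm'] using (hg m (Ioo_subset_Icc_self hm)).hasDerivWithinAt.derivWithin
      (uniqueDiffWithinAt_Ioi m)
  have h_le : g m ≤ g v := h_min hv
  simp only [g, sub_self] at h_le
  linarith

noncomputable def reward (σ w : ℝ) : ℝ := w * gaussCDF ((√(π / 2) - w) / σ)

noncomputable def rewardDeriv (σ w : ℝ) : ℝ :=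
  gaussCDF ((√(π / 2) - w) / σ) - w / σ * gaussPDF ((√(π / 2) - w) / σ)

noncomputable def rewardDeriv2 (σ w : ℝ) : ℝ :=
  -gaussPDF ((√(π / 2) - w) / σ) * (2 / σ + w * ((√(π / 2) - w) / σ) / σ ^ 2)

lemma hasDerivAt_sqrt_pi_div_two_sub_div (σ w : ℝ) :
    HasDerivAt (fun w ↦ (√(π / 2) - w) / σ) (-1 / σ) w := by
  simpa using ((hasDerivAt_id w).const_sub (√(π / 2))).div_const σ

section reward

variable {σ : ℝ}

lemma hasDerivAt_reward (w : ℝ) : HasDerivAt (reward σ) (rewardDeriv σ w) w := by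
  have h := (hasDerivAt_id w).mul
    ((hasDerivAt_gaussCDF _).comp w (hasDerivAt_sqrt_pi_div_two_sub_div σ w))
  exact h.congr_deriv (by simp only [rewardDeriv, id, Function.comp_apply]; ring)

lemma hasDerivAt_rewardDeriv (w : ℝ) :
    HasDerivAt (rewardDeriv σ) (rewardDeriv2 σ w) w := by
  have hx := hasDerivAt_sqrt_pi_div_two_sub_div σ w
  have h := ((hasDerivAt_gaussCDF _).comp w hx).sub
    (((hasDerivAt_id w).div_const σ).mul ((hasDerivAt_gaussPDF _).comp w hx))
  exact h.congr_deriv (by simp only [rewardDeriv2, id, Function.comp_apply]; ring)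

lemma rewardDeriv_neg (hσ₀ : 0 < σ) (hσ₁ : σ < 1) {w : ℝ} (hw : √(π / 2) ≤ w) :
    rewardDeriv σ w < 0 := by
  have hc : √(π / 2) < √(π / 2) / σ := (lt_div_iff₀ hσ₀).2 (by nlinarith [sqrt_pi_div_two_gt])
  have hx : (√(π / 2) - w) / σ ≤ 0 := div_nonpos_of_nonpos_of_nonneg (sub_nonpos.2 hw) hσ₀.le
  have h := gaussCDF_lt_sub_mul_gaussPDF hx hc
  rw [rewardDeriv, sub_neg]
  convert h using 2
  field_simp; ring

lemma rewardDeriv2_le (hσ₁ : 1 / 2 ≤ σ) (hσ₂ : σ ≤ 1) {w : ℝ} (hw : w ∈ Icc 0 (√(π / 2))) :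
    rewardDeriv2 σ w ≤ -(1 / 30) := by
  obtain ⟨hw₀, hw₁⟩ := hw
  set x := (√(π / 2) - w) / σ
  have hσ₀ : 0 < σ := by linarith
  have hx₀ : 0 ≤ x := div_nonneg (by linarith) hσ₀.le
  have hx₁ : x ≤ 2 * √(π / 2) := (div_le_iff₀ hσ₀).2 (by nlinarith)
  have hp := one_div_sixty_le_gaussPDF (x := x) (by nlinarith [sq_sqrt (by positivity : 0 ≤ π / 2)])
  have h2 : 2 ≤ 2 / σ + w * x / σ ^ 2 := by
    have h_two : 2 ≤ 2 / σ := by rw [le_div_iff₀ hσ₀]; linarith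
    have h_nonneg : 0 ≤ w * x / σ ^ 2 := by positivity
    linarith
  rw [rewardDeriv2]
  nlinarith

lemma reward_sqrt_pi_div_two : reward σ (√(π / 2)) = √(π / 2) / 2 := by
  rw [reward, sub_self, zero_div, gaussCDF_zero]; ring

lemma mem_Ioo_and_rewardDeriv_eq_zero_of_forall_le (hσ₀ : 0 < σ) (hσ₁ : σ < 1) {m : ℝ}
    (hm : ∀ w, reward σ w ≤ reward σ m) : m ∈ Ioo 0 (√(π / 2)) ∧ rewardDeriv σ m = 0 := by
  have h_crit : rewardDeriv σ m = 0 :=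
    IsLocalMax.hasDerivAt_eq_zero (Eventually.of_forall hm) (hasDerivAt_reward m)
  refine ⟨⟨?_, ?_⟩, h_crit⟩
  · by_contra! h
    have : reward σ m ≤ 0 := mul_nonpos_of_nonpos_of_nonneg h (gaussCDF_pos _).le
    linarith [hm (√(π / 2)), reward_sqrt_pi_div_two (σ := σ), sqrt_pi_div_two_gt]
  · by_contra! h
    exact (rewardDeriv_neg hσ₀ hσ₁ h).ne h_crit

end reward

/-- Let `u* = √(π/2)`, `σ ∈ (1/2, 1)`, `v ∈ (0, u*)`, and
`r v σ = v Φ((u* - v)/σ)`. If `v*(σ)` maximizes `r · σ`, then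
`r (v* σ) σ - r v σ ≥ (1/60) (v* σ - v)²`. -/
theorem stmt_18 (vstar : ℝ → ℝ)
    (hvmax : ∀ σ ∈ Set.Ioo (1 / 2 : ℝ) 1, ∀ w : ℝ,
      w * gaussCDF ((Real.sqrt (Real.pi / 2) - w) / σ) ≤
        vstar σ * gaussCDF ((Real.sqrt (Real.pi / 2) - vstar σ) / σ)) :
    ∀ σ ∈ Set.Ioo (1 / 2 : ℝ) 1,
      ∀ v ∈ Set.Ioo (0 : ℝ) (Real.sqrt (Real.pi / 2)),
        (1 / 60) * (vstar σ - v) ^ 2 ≤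
          vstar σ * gaussCDF ((Real.sqrt (Real.pi / 2) - vstar σ) / σ) -
            v * gaussCDF ((Real.sqrt (Real.pi / 2) - v) / σ) := by
  intro σ ⟨hσ₁, hσ₂⟩ v hv
  have hσ₀ : (0 : ℝ) < σ := by linarith
  obtain ⟨hm, hm'⟩ := mem_Ioo_and_rewardDeriv_eq_zero_of_forall_le hσ₀ hσ₂ (hvmax σ ⟨hσ₁, hσ₂⟩)
  have h := half_mul_sq_le_sub_of_deriv2_le (f := reward σ) (k := 1 / 30)
    (fun w _ ↦ hasDerivAt_reward w) (fun w _ ↦ hasDerivAt_rewardDeriv w)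
    (fun w hw ↦ rewardDeriv2_le hσ₁.le hσ₂.le (Ioo_subset_Icc_self hw)) hm hm'
    (Ioo_subset_Icc_self hv)
  rw [← neg_sub, neg_sq] at h
  unfold reward at h
  linarith
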